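/- arXiv:1807.07731 — 3 statements merged into one kernel-verified Lean document; each statement's English description precedes it below -/
import Mathlib

section
/- Let 0 < α < 1 and λ ∈ ℂ. For every t > 0, the function t ↦ E_α(λ t^α) is differentiable at t and its derivative equals λ t^{α−1} E_{α,α}(λ t^α). -/
/-!
The series `∑ zⁿ / Γ(αn + 1)` has infinite radius of convergence, since `Γ(x) / Γ(x + α) → 0`
(by log-convexity of `Γ` when `α < 1`, by its monotonicity on `[2, ∞)` when `α ≥ 1`), so it may be
differentiated termwise. As `Γ(α(n + 1) + 1) = α(n + 1) Γ(αn + α)`, the differentiated series is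
`E_{α,α}(z) / α`, and the chain rule with `d/dt (λ t^α) = λ α t^{α-1}` gives the claim.
-/

/-- The two-parameter Mittag-Leffler function `E_{α,β}(z) = ∑_{k=0}^∞ z^k / Γ(αk + β)`. -/
noncomputable def mittagLeffler (α β : ℝ) (z : ℂ) : ℂ :=
  ∑' k : ℕ, z ^ k / Complex.Gamma (α * k + β)

open Filter Topology

namespace Real

theorem mul_Gamma_le_rpow_mul_Gamma_add {α x : ℝ} (hα₀ : 0 < α) (hα₁ : α < 1) (hx : 0 < x) :
    x * Gamma x ≤ (x + α) ^ (1 - α) * Gamma (x + α) := by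
  have hxα : 0 < x + α := by linarith
  have hΓ : 0 < Gamma (x + α) := Gamma_pos_of_pos hxα
  have hconv := Gamma_mul_add_mul_le_rpow_Gamma_mul_rpow_Gamma hxα (by linarith : 0 < x + α + 1)
    hα₀ (sub_pos.2 hα₁) (add_sub_cancel α 1)
  rw [show α * (x + α) + (1 - α) * (x + α + 1) = x + 1 by ring, Gamma_add_one hx.ne',
    Gamma_add_one hxα.ne', mul_rpow hxα.le hΓ.le] at hconv
  calc x * Gamma x ≤ Gamma (x + α) ^ α * ((x + α) ^ (1 - α) * Gamma (x + α) ^ (1 - α)) := hconv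
    _ = (x + α) ^ (1 - α) * Gamma (x + α) := by
      rw [mul_left_comm, ← rpow_add hΓ, add_sub_cancel, rpow_one]

theorem mul_Gamma_le_Gamma_add {α x : ℝ} (hα : 1 ≤ α) (hx : 1 ≤ x) :
    x * Gamma x ≤ Gamma (x + α) := by
  rw [← Gamma_add_one (by positivity)]
  exact Gamma_strictMonoOn_Ici.monotoneOn (Set.mem_Ici.2 (by linarith))
    (Set.mem_Ici.2 (by linarith)) (by linarith)

theorem tendsto_Gamma_div_Gamma_add_atTop {α : ℝ} (hα : 0 < α) :
    Tendsto (fun x => Gamma x / Gamma (x + α)) atTop (𝓝 0) := by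
  have hpos : ∀ᶠ x : ℝ in atTop, 0 ≤ Gamma x / Gamma (x + α) := by
    filter_upwards [eventually_gt_atTop 0] with x hx
    exact div_nonneg (Gamma_pos_of_pos hx).le (Gamma_pos_of_pos (by linarith)).le
  rcases lt_or_ge α 1 with hα₁ | hα₁
  · refine squeeze_zero' hpos ?_ (g := fun x => (x + α) ^ (-α) * ((x + α) / x)) ?_
    · filter_upwards [eventually_gt_atTop 0] with x hx
      have hxα : 0 < x + α := by linarith
      have hΓ : 0 < Gamma (x + α) := Gamma_pos_of_pos hxα
      calc Gamma x / Gamma (x + α)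
          ≤ (x + α) ^ (1 - α) * Gamma (x + α) / x / Gamma (x + α) := by
            gcongr
            rw [le_div_iff₀ hx, mul_comm]
            exact mul_Gamma_le_rpow_mul_Gamma_add hα hα₁ hx
        _ = (x + α) ^ (-α) * ((x + α) / x) := by
            rw [show 1 - α = -α + 1 by ring, rpow_add_one hxα.ne']
            field_simp
    · have hshift : Tendsto (fun x : ℝ => x + α) atTop atTop :=
        tendsto_atTop_add_const_right _ _ tendsto_id
      have hratio : Tendsto (fun x : ℝ => (x + α) / x) atTop (𝓝 1) := by
        have h : Tendsto (fun x : ℝ => 1 + α / x) atTop (𝓝 (1 + 0)) :=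
          tendsto_const_nhds.add (tendsto_const_nhds.div_atTop tendsto_id)
        rw [add_zero] at h
        refine h.congr' ?_
        filter_upwards [eventually_ne_atTop 0] with x hx
        field_simp
      simpa using ((tendsto_rpow_neg_atTop hα).comp hshift).mul hratio
  · refine squeeze_zero' hpos ?_ tendsto_inv_atTop_zero
    filter_upwards [eventually_ge_atTop 1] with x hx
    rw [div_le_iff₀ (Gamma_pos_of_pos (by linarith)), le_inv_mul_iff₀ (by linarith)]
    exact mul_Gamma_le_Gamma_add hα₁ hx

theorem summable_pow_div_Gamma_mul_add_one {α C : ℝ} (hα : 0 < α) (hC : 0 < C) :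
    Summable fun n : ℕ => C ^ n / Gamma (α * n + 1) := by
  have hΓ (n : ℕ) : 0 < Gamma (α * n + 1) := Gamma_pos_of_pos (by positivity)
  refine summable_of_ratio_test_tendsto_lt_one zero_lt_one
    (Eventually.of_forall fun n => (div_pos (pow_pos hC n) (hΓ n)).ne') ?_
  have hlin : Tendsto (fun n : ℕ => α * n + 1) atTop atTop :=
    tendsto_atTop_add_const_right _ _ (tendsto_natCast_atTop_atTop.const_mul_atTop hα)
  have h := ((tendsto_Gamma_div_Gamma_add_atTop hα).comp hlin).const_mul C
  rw [mul_zero] at h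
  refine h.congr fun n => ?_
  have hΓ' := hΓ (n + 1)
  rw [norm_of_nonneg (by positivity), norm_of_nonneg (by positivity)]
  push_cast at hΓ' ⊢
  rw [show α * (n + 1) + 1 = α * n + 1 + α by ring] at hΓ' ⊢
  simp only [Function.comp_apply]
  field_simp
  ring

end Real

namespace Complex

theorem Gamma_ofReal_mul_natCast_add_one (α : ℝ) (n : ℕ) :
    Gamma (α * n + 1) = Real.Gamma (α * n + 1) := by
  rw [← Gamma_ofReal]
  push_cast
  rfl

theorem Gamma_ofReal_mul_natCast_succ_add_one {α : ℝ} (hα : 0 < α) (n : ℕ) :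
    Gamma (α * (n + 1 : ℕ) + 1) = α * (n + 1) * Gamma (α * n + α) := by
  have hpos : (0 : ℝ) < α * n + α := by positivity
  have hne : (α * n + α : ℂ) ≠ 0 := by exact_mod_cast hpos.ne'
  rw [show (α * (n + 1 : ℕ) + 1 : ℂ) = (α * n + α) + 1 by push_cast; ring, Gamma_add_one _ hne]
  ring

end Complex

theorem tsum_natCast_mul_pow_div_Gamma_eq_mittagLeffler {α : ℝ} (hα : 0 < α) {z : ℂ}
    (hz : Summable fun n : ℕ => n * z ^ (n - 1) / Complex.Gamma (α * n + 1)) :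
    ∑' n : ℕ, n * z ^ (n - 1) / Complex.Gamma (α * n + 1) = mittagLeffler α α z / α := by
  have hα' : (α : ℂ) ≠ 0 := by exact_mod_cast hα.ne'
  rw [hz.tsum_eq_zero_add, mittagLeffler, ← tsum_div_const]
  simp only [CharP.cast_eq_zero, zero_mul, zero_div, zero_add, Nat.add_sub_cancel]
  refine tsum_congr fun n => ?_
  rw [Complex.Gamma_ofReal_mul_natCast_succ_add_one hα n]
  push_cast
  field_simp

theorem hasDerivAt_mittagLeffler_one {α : ℝ} (hα : 0 < α) (z : ℂ) :
    HasDerivAt (mittagLeffler α 1) (mittagLeffler α α z / α) z := by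
  set R := ‖z‖ + 1
  have hR : 1 ≤ R := le_add_of_nonneg_left (norm_nonneg z)
  have hΓ (n : ℕ) : 0 < Real.Gamma (α * n + 1) := Real.Gamma_pos_of_pos (by positivity)
  have hbound (n : ℕ) (w : ℂ) (hw : w ∈ Metric.ball 0 R) :
      ‖n * w ^ (n - 1) / Complex.Gamma (α * n + 1)‖ ≤ (2 * R) ^ n / Real.Gamma (α * n + 1) := by
    rw [mem_ball_zero_iff] at hw
    rw [Complex.Gamma_ofReal_mul_natCast_add_one, norm_div, Complex.norm_real,
      Real.norm_of_nonneg (hΓ n).le, norm_mul, norm_pow, Complex.norm_natCast, mul_pow]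
    gcongr
    · exact_mod_cast (Nat.lt_two_pow_self).le
    · calc ‖w‖ ^ (n - 1) ≤ R ^ (n - 1) := by gcongr
        _ ≤ R ^ n := pow_le_pow_right₀ hR (Nat.sub_le n 1)
  have hsummable_zero : Summable fun n : ℕ => (0 : ℂ) ^ n / Complex.Gamma (α * n + 1) :=
    (hasSum_single 0 fun n hn => by simp [hn]).summable
  have hderiv := hasDerivAt_tsum_of_isPreconnected
    (Real.summable_pow_div_Gamma_mul_add_one hα (by positivity : (0 : ℝ) < 2 * R))
    Metric.isOpen_ball (convex_ball (0 : ℂ) R).isPreconnected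
    (fun n w _ => (hasDerivAt_pow n w).div_const (Complex.Gamma (α * n + 1))) hbound
    (Metric.mem_ball_self (by positivity)) hsummable_zero
    (mem_ball_zero_iff.2 (lt_add_one ‖z‖))
  have hsummable : Summable fun n : ℕ => n * z ^ (n - 1) / Complex.Gamma (α * n + 1) :=
    .of_norm_bounded (Real.summable_pow_div_Gamma_mul_add_one hα (by positivity))
      fun n => hbound n z (mem_ball_zero_iff.2 (lt_add_one ‖z‖))
  have hfun : mittagLeffler α 1 = fun w => ∑' n : ℕ, w ^ n / Complex.Gamma (α * n + 1) := by
    funext w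
    simp only [mittagLeffler, Complex.ofReal_one]
  rw [hfun, ← tsum_natCast_mul_pow_div_Gamma_eq_mittagLeffler hα hsummable]
  exact hderiv

theorem hasDerivAt_mittagLeffler_general (α : ℝ) (hα₀ : 0 < α) (lam : ℂ)
    (t : ℝ) (ht : 0 < t) :
    HasDerivAt (fun s : ℝ => mittagLeffler α 1 (lam * ((s ^ α : ℝ) : ℂ)))
      (lam * ((t ^ (α - 1) : ℝ) : ℂ) * mittagLeffler α α (lam * ((t ^ α : ℝ) : ℂ))) t := by
  have hinner : HasDerivAt (fun s : ℝ => lam * ((s ^ α : ℝ) : ℂ))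
      (lam * ((α * t ^ (α - 1) : ℝ) : ℂ)) t :=
    (Real.hasDerivAt_rpow_const (Or.inl ht.ne')).ofReal_comp.const_mul lam
  refine ((hasDerivAt_mittagLeffler_one hα₀ _).comp t hinner).congr_deriv ?_
  have hα : (α : ℂ) ≠ 0 := by exact_mod_cast hα₀.ne'
  push_cast
  field_simp

/-- For `0 < α < 1`, `λ ∈ ℂ` and every `t > 0`, the map `t ↦ E_α(λ t^α)` is
differentiable at `t` with derivative `λ t^{α−1} E_{α,α}(λ t^α)`. -/
theorem hasDerivAt_mittagLeffler (α : ℝ) (hα₀ : 0 < α) (hα₁ : α < 1) (lam : ℂ)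
    (t : ℝ) (ht : 0 < t) :
    HasDerivAt (fun s : ℝ => mittagLeffler α 1 (lam * ((s ^ α : ℝ) : ℂ)))
      (lam * ((t ^ (α - 1) : ℝ) : ℂ) * mittagLeffler α α (lam * ((t ^ α : ℝ) : ℂ))) t :=
  hasDerivAt_mittagLeffler_general α hα₀ lam t ht
end

section
/- Let α > 0, β > 0, λ ∈ ℂ and let s be a real number with s > |λ|^{1/α}. Then the improper integral ∫₀^∞ e^{−st} t^{β−1} E_{α,β}(λ t^α) dt converges and equals s^{α−β} / (s^α − λ). -/
open MeasureTheory

/-!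
Expanding `E_{α,β}`, the integrand is `∑ₖ λ^k / Γ(αk+β) · t^{αk+β-1} e^{-st}`, and the Gamma
integral gives the `k`-th term the integral `λ^k s^{-(αk+β)}`. When `|λ| s^{-α} < 1` these integrals
are absolutely summable (a geometric series), so summation and integration may be interchanged,
and the geometric series sums to `s^{-β} / (1 - λ s^{-α}) = s^{α-β} / (s^α - λ)`.
-/

open Set Filter

namespace MeasureTheory

variable {X E : Type*} [MeasurableSpace X] {μ : Measure X} [NormedAddCommGroup E] [CompleteSpace E]
  {ι : Type*} [Countable ι]

theorem integrable_tsum_of_tsum_lintegral_enorm_ne_top {F : ι → X → E}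
    (hF : ∀ i, AEStronglyMeasurable (F i) μ) (h : ∑' i, ∫⁻ a, ‖F i a‖ₑ ∂μ ≠ ⊤) :
    Integrable (fun a ↦ ∑' i, F i a) μ := by
  have hsum : ∀ᵐ a ∂μ, Summable fun i ↦ ‖F i a‖ :=
    summable_norm_of_tsum_eLpNorm_ne_top le_rfl hF (by simpa [eLpNorm_one_eq_lintegral_enorm])
  refine ⟨aestronglyMeasurable_of_tendsto_ae atTop
    (fun n ↦ Finset.aestronglyMeasurable_fun_sum n fun i _ ↦ hF i)
    (hsum.mono fun a ha ↦ ha.of_norm.hasSum), ?_⟩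
  calc ∫⁻ a, ‖∑' i, F i a‖ₑ ∂μ ≤ ∫⁻ a, ∑' i, ‖F i a‖ₑ ∂μ :=
        lintegral_mono fun _ ↦ enorm_tsum_le_tsum_enorm
    _ = ∑' i, ∫⁻ a, ‖F i a‖ₑ ∂μ := lintegral_tsum fun i ↦ (hF i).enorm
    _ < ⊤ := h.lt_top

theorem integrable_tsum_of_summable_integral_norm {F : ι → X → E}
    (hF_int : ∀ i, Integrable (F i) μ) (hF_sum : Summable fun i ↦ ∫ a, ‖F i a‖ ∂μ) :
    Integrable (fun a ↦ ∑' i, F i a) μ := by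
  refine integrable_tsum_of_tsum_lintegral_enorm_ne_top (fun i ↦ (hF_int i).1) ?_
  simp_rw [← ofReal_integral_norm_eq_lintegral_enorm (hF_int _)]
  rw [← ENNReal.ofReal_tsum_of_nonneg (fun i ↦ integral_nonneg fun a ↦ norm_nonneg _) hF_sum]
  exact ENNReal.ofReal_ne_top

end MeasureTheory

theorem Real.integrableOn_rpow_mul_exp_neg_mul_Ioi {a r : ℝ} (ha : 0 < a) (hr : 0 < r) :
    IntegrableOn (fun t : ℝ ↦ t ^ (a - 1) * Real.exp (-(r * t))) (Ioi 0) :=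
  Integrable.of_integral_ne_zero <| by
    rw [Real.integral_rpow_mul_exp_neg_mul_Ioi ha hr]; positivity

theorem hasSum_pow_mul_rpow_mul_add {𝕜 : Type*} [RCLike 𝕜] {z : 𝕜} {x : ℝ} (hx : 0 < x)
    (α β : ℝ) (h : ‖z‖ * x ^ α < 1) :
    HasSum (fun k : ℕ ↦ z ^ k * ((x ^ (α * k + β) : ℝ) : 𝕜))
      ((x ^ β : ℝ) / (1 - z * (x ^ α : ℝ))) := by
  have hterm (k : ℕ) :
      z ^ k * ((x ^ (α * k + β) : ℝ) : 𝕜) = (x ^ β : ℝ) * (z * (x ^ α : ℝ)) ^ k := by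
    rw [Real.rpow_add hx, Real.rpow_mul_natCast hx.le]
    push_cast; ring
  have hq : ‖z * (x ^ α : ℝ)‖ < 1 := by
    rwa [norm_mul, RCLike.norm_ofReal, abs_of_pos (by positivity)]
  simpa only [hterm, div_eq_mul_inv] using (hasSum_geometric_of_norm_lt_one hq).mul_left _

section LaplaceTerm

variable {α β : ℝ} {lam : ℂ} {s : ℝ}

noncomputable def mittagLefflerLaplaceTerm (α β : ℝ) (lam : ℂ) (s : ℝ) (k : ℕ) (t : ℝ) : ℂ :=
  lam ^ k / Complex.Gamma (α * k + β) * ((t ^ (α * k + β - 1) * Real.exp (-(s * t)) : ℝ) : ℂ)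

theorem exp_mul_rpow_mul_mittagLeffler_eq_tsum {t : ℝ} (ht : 0 < t) :
    ((Real.exp (-(s * t)) : ℝ) : ℂ) * ((t ^ (β - 1) : ℝ) : ℂ) *
      mittagLeffler α β (lam * ((t ^ α : ℝ) : ℂ)) =
      ∑' k, mittagLefflerLaplaceTerm α β lam s k t := by
  rw [mittagLeffler, ← tsum_mul_left]
  refine tsum_congr fun k ↦ ?_
  have hpow : t ^ (α * k + β - 1) = t ^ (β - 1) * (t ^ α) ^ k := by
    rw [← Real.rpow_mul_natCast ht.le, ← Real.rpow_add ht]; ring_nf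
  rw [mittagLefflerLaplaceTerm, hpow]
  push_cast; ring

theorem Complex.Gamma_mul_natCast_add (k : ℕ) :
    Complex.Gamma (α * k + β) = Real.Gamma (α * k + β) := by
  rw [← Complex.Gamma_ofReal]; push_cast; rfl

theorem integral_mittagLefflerLaplaceTerm (hα : 0 ≤ α) (hβ : 0 < β) (hs : 0 < s) (k : ℕ) :
    ∫ t in Ioi 0, mittagLefflerLaplaceTerm α β lam s k t =
      lam ^ k * (((1 / s) ^ (α * k + β) : ℝ) : ℂ) := by
  have ha : 0 < α * k + β := by positivity
  have hΓ : (Real.Gamma (α * k + β) : ℂ) ≠ 0 := by exact_mod_cast (Real.Gamma_pos_of_pos ha).ne'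
  simp only [mittagLefflerLaplaceTerm]
  rw [integral_const_mul, integral_complex_ofReal, Real.integral_rpow_mul_exp_neg_mul_Ioi ha hs,
    Complex.Gamma_mul_natCast_add]
  push_cast
  field_simp

theorem integral_norm_mittagLefflerLaplaceTerm (hα : 0 ≤ α) (hβ : 0 < β) (hs : 0 < s) (k : ℕ) :
    ∫ t in Ioi 0, ‖mittagLefflerLaplaceTerm α β lam s k t‖ =
      ‖lam‖ ^ k * (1 / s) ^ (α * k + β) := by
  have ha : 0 < α * k + β := by positivity
  have hΓ := Real.Gamma_pos_of_pos ha
  have hnorm : EqOn (fun t ↦ ‖mittagLefflerLaplaceTerm α β lam s k t‖)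
      (fun t ↦ ‖lam‖ ^ k / Real.Gamma (α * k + β) * (t ^ (α * k + β - 1) * Real.exp (-(s * t))))
      (Ioi 0) := fun t (ht : 0 < t) ↦ by
    simp only [mittagLefflerLaplaceTerm]
    rw [Complex.Gamma_mul_natCast_add, norm_mul, norm_div, norm_pow,
      Complex.norm_real, Complex.norm_real, Real.norm_of_nonneg hΓ.le,
      Real.norm_of_nonneg (by positivity)]
  rw [setIntegral_congr_fun measurableSet_Ioi hnorm, integral_const_mul,
    Real.integral_rpow_mul_exp_neg_mul_Ioi ha hs]
  field_simp

theorem integrableOn_mittagLefflerLaplaceTerm (hα : 0 ≤ α) (hβ : 0 < β) (hs : 0 < s) (k : ℕ) :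
    IntegrableOn (mittagLefflerLaplaceTerm α β lam s k) (Ioi 0) :=
  ((Real.integrableOn_rpow_mul_exp_neg_mul_Ioi (by positivity) hs).ofReal).const_mul _

theorem summable_integral_norm_mittagLefflerLaplaceTerm (hα : 0 ≤ α) (hβ : 0 < β) (hs : 0 < s)
    (hlam : ‖lam‖ * (1 / s) ^ α < 1) :
    Summable fun k ↦ ∫ t in Ioi 0, ‖mittagLefflerLaplaceTerm α β lam s k t‖ := by
  simp_rw [integral_norm_mittagLefflerLaplaceTerm hα hβ hs]
  exact (hasSum_pow_mul_rpow_mul_add (𝕜 := ℝ) (one_div_pos.2 hs) α β (by rwa [norm_norm])).summable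

theorem hasSum_integral_mittagLefflerLaplaceTerm (hα : 0 ≤ α) (hβ : 0 < β) (hs : 0 < s)
    (hlam : ‖lam‖ * (1 / s) ^ α < 1) :
    HasSum (fun k ↦ ∫ t in Ioi 0, mittagLefflerLaplaceTerm α β lam s k t)
      ((s : ℂ) ^ ((α - β : ℝ) : ℂ) / ((s : ℂ) ^ ((α : ℝ) : ℂ) - lam)) := by
  simp_rw [integral_mittagLefflerLaplaceTerm hα hβ hs]
  have hvalue : (s : ℂ) ^ ((α - β : ℝ) : ℂ) / ((s : ℂ) ^ ((α : ℝ) : ℂ) - lam) =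
      (((1 / s) ^ β : ℝ) : ℂ) / (1 - lam * (((1 / s) ^ α : ℝ) : ℂ)) := by
    rw [← Complex.ofReal_cpow hs.le, ← Complex.ofReal_cpow hs.le, Real.rpow_sub hs,
      Real.div_rpow zero_le_one hs.le, Real.div_rpow zero_le_one hs.le, Real.one_rpow,
      Real.one_rpow]
    have hsα : ((s ^ α : ℝ) : ℂ) ≠ 0 := by exact_mod_cast (Real.rpow_pos_of_pos hs α).ne'
    have hsβ : ((s ^ β : ℝ) : ℂ) ≠ 0 := by exact_mod_cast (Real.rpow_pos_of_pos hs β).ne'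
    push_cast
    field_simp
  rw [hvalue]
  exact hasSum_pow_mul_rpow_mul_add (one_div_pos.2 hs) α β hlam

end LaplaceTerm

/-- Laplace transform of `t^{β−1} E_{α,β}(λ t^α)`: for `α, β > 0`, `λ ∈ ℂ` and real
`s > |λ|^{1/α}`, the integral `∫₀^∞ e^{−st} t^{β−1} E_{α,β}(λ t^α) dt` converges and
equals `s^{α−β}/(s^α − λ)`. -/
theorem laplace_mittagLeffler (α β : ℝ) (hα : 0 < α) (hβ : 0 < β) (lam : ℂ)
    (s : ℝ) (hs : ‖lam‖ ^ (1 / α) < s) :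
    IntegrableOn
      (fun t : ℝ =>
        ((Real.exp (-(s * t)) : ℝ) : ℂ) * ((t ^ (β - 1) : ℝ) : ℂ) *
          mittagLeffler α β (lam * ((t ^ α : ℝ) : ℂ)))
      (Set.Ioi 0) volume ∧
    (∫ t in Set.Ioi (0 : ℝ),
        ((Real.exp (-(s * t)) : ℝ) : ℂ) * ((t ^ (β - 1) : ℝ) : ℂ) *
          mittagLeffler α β (lam * ((t ^ α : ℝ) : ℂ))) =
      (s : ℂ) ^ ((α - β : ℝ) : ℂ) / ((s : ℂ) ^ ((α : ℝ) : ℂ) - lam) := by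
  have hs0 : 0 < s := (Real.rpow_nonneg (norm_nonneg lam) _).trans_lt hs
  have hlam : ‖lam‖ * (1 / s) ^ α < 1 := by
    rwa [Real.div_rpow zero_le_one hs0.le, Real.one_rpow, mul_one_div,
      div_lt_one (by positivity), ← Real.rpow_inv_lt_iff_of_pos (norm_nonneg _) hs0.le hα,
      ← one_div]
  have hint := integrableOn_mittagLefflerLaplaceTerm (lam := lam) hα.le hβ hs0
  have hsum := summable_integral_norm_mittagLefflerLaplaceTerm hα.le hβ hs0 hlam
  have hexpand : EqOn (fun t : ℝ ↦ ((Real.exp (-(s * t)) : ℝ) : ℂ) * ((t ^ (β - 1) : ℝ) : ℂ) *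
      mittagLeffler α β (lam * ((t ^ α : ℝ) : ℂ)))
      (fun t ↦ ∑' k, mittagLefflerLaplaceTerm α β lam s k t) (Ioi 0) :=
    fun _ ht ↦ exp_mul_rpow_mul_mittagLeffler_eq_tsum ht
  refine ⟨IntegrableOn.congr_fun (integrable_tsum_of_summable_integral_norm hint hsum)
    hexpand.symm measurableSet_Ioi, ?_⟩
  rw [setIntegral_congr_fun measurableSet_Ioi hexpand,
    ← integral_tsum_of_summable_integral_norm hint hsum]
  exact (hasSum_integral_mittagLefflerLaplaceTerm hα.le hβ hs0 hlam).tsum_eq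
end

section
/- The map X : (−π, π) → ℝ² defined by X(t) = (sin t, sin 2t) is injective. -/
open Real

lemma sin_zero_aux {x : ℝ} (h1 : -π < x) (h2 : x < π) (h : Real.sin x = 0) : x = 0 := by
  rcases Real.sin_eq_zero_iff.mp h with ⟨n, hn⟩
  have hπ := Real.pi_pos
  have hn1 : |(n : ℝ) * π| < π := by
    rw [hn, abs_lt]; exact ⟨h1, h2⟩
  have : |(n : ℝ)| < 1 := by
    rw [abs_mul, abs_of_pos hπ] at hn1
    nlinarith [abs_nonneg (n : ℝ)]
  have : n = 0 := by
    have h3 : (-1 : ℤ) < n := by exact_mod_cast (abs_lt.mp this).1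
    have h4 : (n : ℤ) < 1 := by exact_mod_cast (abs_lt.mp this).2
    omega
  simp [this] at hn
  linarith [hn]

/-- The figure-eight parametrization `X(t) = (sin t, sin 2t)` is injective on the
open interval `(−π, π)`. -/
theorem figure_eight_injective :
    Set.InjOn (fun t : ℝ => (Real.sin t, Real.sin (2 * t)))
      (Set.Ioo (-π) π) := by
  rintro s ⟨hs1, hs2⟩ t ⟨ht1, ht2⟩ h
  simp only [Prod.mk.injEq] at h
  obtain ⟨h1, h2⟩ := h
  rw [Real.sin_two_mul, Real.sin_two_mul, h1] at h2
  rcases eq_or_ne (Real.sin t) 0 with h0 | h0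
  · rw [sin_zero_aux hs1 hs2 (h1.trans h0), sin_zero_aux ht1 ht2 h0]
  · have hc : Real.cos s = Real.cos t := by
      have h2' : Real.sin t * Real.cos s = Real.sin t * Real.cos t := by linarith
      exact mul_left_cancel₀ h0 h2'
    have habs : |s| = |t| := by
      have hcs : Real.cos |s| = Real.cos |t| := by
        rw [Real.cos_abs, Real.cos_abs, hc]
      apply Real.injOn_cos ⟨abs_nonneg s, ?_⟩ ⟨abs_nonneg t, ?_⟩ hcs
      · exact le_of_lt (abs_lt.mpr ⟨hs1, hs2⟩)
      · exact le_of_lt (abs_lt.mpr ⟨ht1, ht2⟩)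
    rcases abs_eq_abs.mp habs with h | h
    · exact h
    · exfalso
      apply h0
      rw [h, Real.sin_neg] at h1
      linarith
end
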